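/- arXiv:2401.13911 — 2 statements merged into one kernel-verified Lean document; each statement's English description precedes it below -/
import Mathlib

section
/- Let n ≥ 2 and let A be the n×n arrowhead matrix with diagonal entries λ^(n-1)_1,…,λ^(n-1)_{n-1}, last column a_1,…,a_{n-1}, last row b_1,…,b_{n-1}, and corner entry a_nn. Assume the λ^(n-1)_i are pairwise distinct, and let λ^(n)_1,…,λ^(n)_n be a listing of the eigenvalues of A with multiplicity, i.e. det(A − x·Id_n) = ∏_{i=1}^{n}(λ^(n)_i − x) for all x. Then for every 1 ≤ k ≤ n−1, b_k · a_k = − ∏_{l=1}^{n}(λ^(n)_l − λ^(n-1)_k) / ∏_{l=1, l≠k}^{n-1}(λ^(n-1)_l − λ^(n-1)_k). -/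
/-!
At `x = λ_k` the `k`-th row and the `k`-th column of `A - x • 1` vanish except for the arrow
entries `a_k` and `b_k`. Expanding the determinant along that row and then along that column
leaves the diagonal minor, so `det (A - λ_k • 1) = -(b_k a_k) ∏_{l ≠ k} (λ_l - λ_k)`. Comparing
with the factorisation of the characteristic polynomial and dividing by the product, which is
nonzero because the `λ_l` are distinct, gives the formula.
-/

open Matrix Finset

noncomputable section

/-- The `(m+2) × (m+2)` arrowhead matrix with diagonal data `μ`, last column `a`,
last row `b`, and corner entry `c`. -/
def arrowhead (m : ℕ) (μ a b : Fin (m+1) → ℂ) (c : ℂ) :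
    Matrix (Fin (m+2)) (Fin (m+2)) ℂ := fun i j =>
  if hi : i = Fin.last (m+1) then
    if hj : j = Fin.last (m+1) then c else b (j.castPred hj)
  else
    if hj : j = Fin.last (m+1) then a (i.castPred hi)
    else if i = j then μ (i.castPred hi) else 0

namespace Matrix

variable {R : Type*} [CommRing R] {n : ℕ}

theorem det_eq_of_row_eq_single (M : Matrix (Fin (n+1)) (Fin (n+1)) R) (i j : Fin (n+1))
    (h : ∀ j' ≠ j, M i j' = 0) :
    M.det = (-1) ^ (i + j : ℕ) * M i j * (M.submatrix i.succAbove j.succAbove).det := by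
  rw [det_succ_row M i, Finset.sum_eq_single j (fun j' _ hj' => by rw [h j' hj']; ring)
    (fun hj => absurd (Finset.mem_univ j) hj)]

theorem det_eq_of_col_eq_single (M : Matrix (Fin (n+1)) (Fin (n+1)) R) (i j : Fin (n+1))
    (h : ∀ i' ≠ i, M i' j = 0) :
    M.det = (-1) ^ (i + j : ℕ) * M i j * (M.submatrix i.succAbove j.succAbove).det := by
  rw [det_succ_column M j, Finset.sum_eq_single i (fun i' _ hi' => by rw [h i' hi']; ring)
    (fun hi => absurd (Finset.mem_univ i) hi)]

end Matrix

theorem Fin.prod_succAbove_eq_prod_erase {M : Type*} [CommMonoid M] {n : ℕ}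
    (f : Fin (n+1) → M) (k : Fin (n+1)) :
    ∏ i : Fin n, f (k.succAbove i) = ∏ l ∈ Finset.univ.erase k, f l := by
  rw [← Finset.compl_singleton, ← Fin.image_succAbove_univ,
    Finset.prod_image (fun x _ y _ h => Fin.succAbove_right_injective h)]

section Arrowhead

variable {m : ℕ} {μ a b : Fin (m+1) → ℂ} {c : ℂ}

@[simp]
theorem arrowhead_last_last : arrowhead m μ a b c (Fin.last _) (Fin.last _) = c := by
  simp [arrowhead]

@[simp]
theorem arrowhead_last_castSucc (j : Fin (m+1)) :
    arrowhead m μ a b c (Fin.last _) j.castSucc = b j := by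
  simp [arrowhead, (Fin.castSucc_lt_last j).ne]

@[simp]
theorem arrowhead_castSucc_last (i : Fin (m+1)) :
    arrowhead m μ a b c i.castSucc (Fin.last _) = a i := by
  simp [arrowhead, (Fin.castSucc_lt_last i).ne]

@[simp]
theorem arrowhead_castSucc_castSucc (i j : Fin (m+1)) :
    arrowhead m μ a b c i.castSucc j.castSucc = diagonal μ i j := by
  simp [arrowhead, (Fin.castSucc_lt_last i).ne, (Fin.castSucc_lt_last j).ne, diagonal_apply]

theorem arrowhead_sub_smul_one (x : ℂ) :
    arrowhead m μ a b c - x • (1 : Matrix (Fin (m+2)) (Fin (m+2)) ℂ) =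
      arrowhead m (fun i => μ i - x) a b (c - x) := by
  ext i j
  induction i using Fin.lastCases <;> induction j using Fin.lastCases <;>
    simp [one_apply, diagonal_apply, ite_sub_ite, (Fin.castSucc_lt_last _).ne,
      (Fin.castSucc_lt_last _).ne']

theorem det_arrowhead_of_apply_eq_zero {d : Fin (m+1) → ℂ} (k : Fin (m+1)) (hk : d k = 0) :
    (arrowhead m d a b c).det = -(b k * a k) * ∏ l ∈ Finset.univ.erase k, d l := by
  set A := arrowhead m d a b c
  set N := A.submatrix k.castSucc.succAbove Fin.castSucc
  have hrow : A.det = (-1) ^ (k + (m + 1) : ℕ) * a k * N.det := by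
    rw [det_eq_of_row_eq_single A k.castSucc (Fin.last _), Fin.succAbove_last]
    · simp [A, N]
    · intro j hj
      induction j using Fin.lastCases with
      | last => exact absurd rfl hj
      | cast j =>
        rcases eq_or_ne k j with rfl | hkj
        · simp [A, hk]
        · simp [A, hkj]
  have hlast : k.castSucc.succAbove (Fin.last m) = Fin.last (m+1) :=
    Fin.succAbove_ne_last_last (Fin.castSucc_lt_last k).ne
  have hminor : N.submatrix (Fin.last m).succAbove k.succAbove =
      diagonal (fun i => d (k.succAbove i)) := by
    ext i j
    simp [A, N, diagonal_apply]
  have hcol : N.det = (-1) ^ (m + k : ℕ) * b k * ∏ i : Fin m, d (k.succAbove i) := by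
    rw [det_eq_of_col_eq_single N (Fin.last m) k, hminor, det_diagonal]
    · simp [A, N, hlast]
    · intro i hi
      induction i using Fin.lastCases with
      | last => exact absurd rfl hi
      | cast i => simp [A, N, Fin.succAbove_ne]
  have hsign : (-1 : ℂ) ^ (k + (m + 1) : ℕ) * (-1) ^ (m + k : ℕ) = -1 := by
    rw [← pow_add, Odd.neg_one_pow ⟨k + m, by ring⟩]
  rw [hrow, hcol, Fin.prod_succAbove_eq_prod_erase d k]
  linear_combination (a k * b k * ∏ l ∈ Finset.univ.erase k, d l) * hsign

end Arrowhead

/-- the product `b_k·a_k` in terms of the eigenvalues of an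
arrowhead matrix with pairwise distinct diagonal entries. -/
theorem stmt4 (m : ℕ) (lam' a b : Fin (m+1) → ℂ) (ann : ℂ)
    (hdist : Function.Injective lam')
    (lamn : Fin (m+2) → ℂ)
    (hlamn : ∀ x : ℂ,
      (arrowhead m lam' a b ann - x • (1 : Matrix (Fin (m+2)) (Fin (m+2)) ℂ)).det
        = ∏ i, (lamn i - x))
    (k : Fin (m+1)) :
    b k * a k =
      -(∏ l, (lamn l - lam' k)) / ∏ l ∈ Finset.univ.erase k, (lam' l - lam' k) := by
  have hchar := hlamn (lam' k)
  rw [arrowhead_sub_smul_one, det_arrowhead_of_apply_eq_zero k (sub_self _)] at hchar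
  have hgaps : ∏ l ∈ Finset.univ.erase k, (lam' l - lam' k) ≠ 0 :=
    Finset.prod_ne_zero_iff.mpr fun l hl =>
      sub_ne_zero_of_ne fun h => (Finset.ne_of_mem_erase hl) (hdist h)
  rw [eq_div_iff hgaps, ← hchar]
  ring
end
end

section
/- Let n ≥ 2 and let A be an n×n complex matrix with upper-left (n−1)×(n−1) submatrix A^(n-1). Define δ_{n-1}(A) to be the n×n matrix that agrees with A in all entries (i,j) with 1 ≤ i,j ≤ n−1 and in the entry (n,n), and has zero entries (i,n) and (n,i) for 1 ≤ i ≤ n−1. Let E_n be the n×n matrix unit with 1 in position (n,n). Assume that for every pair of eigenvalues μ, ν of A^(n-1) and every nonzero integer m, μ − ν ≠ 2πi·m. Then there exists a unique sequence of matrices h_0, h_1, h_2, … ∈ M_n(ℂ) with h_0 = Id_n such that for every m ≥ 0: [h_{m+1}, i·E_n] = ( m·Id_n − (1/(2πi))·A ) · h_m + h_m · (1/(2πi))·δ_{n-1}(A). (These h_m are the coefficients of the unique formal fundamental solution F̂(z) = (Id + h_1 z^{-1} + h_2 z^{-2} + ⋯) z^{−δ_{n-1}(A)/(2πi)} e^{i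 E_n z} of the system dF/dz = (i E_n − A/(2πi z)) F.) -/
/-!
The commutator with `i E_n` vanishes on block-diagonal matrices (blocks of sizes `n - 1` and `1`)
and is invertible on block-off-diagonal ones. So the equation at step `M` fixes the off-diagonal
blocks of `h_{M+1}`, and is solvable only if the diagonal blocks of its right-hand side vanish.
Since `δ_{n-1}(A)` is the block-diagonal part of `A`, imposing this solvability condition at step
`M + 1` is, for the diagonal blocks `D` of `h_{M+1}`, the equation
`(M + 1) D - [δ_{n-1}(A), D] / (2πi) = (known)`. On the `(n-1)`-block this is a Sylvester equation,
uniquely solvable because no two eigenvalues of `A^(n-1)` differ by `2πi (M + 1)`; on the `(n, n)`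
entry it is a division by `M + 1`. Hence `h_{M+1}` is uniquely determined by `h_M`.
-/

open Matrix

noncomputable section

/-- `2πi` as a complex number. -/
def twoPiI : ℂ := 2 * (Real.pi : ℂ) * Complex.I

/-- `δ_{n-1}(A)`: agrees with `A` on the upper-left `(n−1) × (n−1)` block and the
`(n,n)` entry, zero on the remaining entries of the last row and column. -/
def deltaN (m : ℕ) (A : Matrix (Fin (m+2)) (Fin (m+2)) ℂ) :
    Matrix (Fin (m+2)) (Fin (m+2)) ℂ := fun i j =>
  if (i = Fin.last (m+1) ∧ j = Fin.last (m+1)) ∨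
      (i ≠ Fin.last (m+1) ∧ j ≠ Fin.last (m+1)) then A i j else 0

section Sylvester

open Polynomial

variable {n p : Type*} [Fintype n] [DecidableEq n] [Fintype p] [DecidableEq p]

theorem Matrix.mul_aeval_eq_aeval_mul {R : Type*} [CommRing R] {B : Matrix n n R}
    {C : Matrix p p R} {P : Matrix p n R} (hP : P * B = C * P) (q : R[X]) :
    P * aeval B q = aeval C q * P := by
  have hpow : ∀ k : ℕ, P * B ^ k = C ^ k * P := by
    intro k
    induction k with
    | zero => simp
    | succ k ih =>
      rw [pow_succ, ← Matrix.mul_assoc, ih, Matrix.mul_assoc, hP, pow_succ, Matrix.mul_assoc]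
  simp only [aeval_eq_sum_range, Matrix.mul_sum, Matrix.sum_mul, Matrix.mul_smul, Matrix.smul_mul,
    hpow]

variable {K : Type*} [Field K] [IsAlgClosed K]

theorem Matrix.isUnit_aeval_charpoly_of_disjoint [Nonempty p] {B : Matrix n n K}
    {C : Matrix p p K} (h : Disjoint (spectrum K B) (spectrum K C)) :
    IsUnit (aeval C B.charpoly) := by
  rw [← spectrum.zero_notMem_iff K, spectrum.map_polynomial_aeval_of_nonempty C _
    (spectrum.nonempty_of_isAlgClosed_of_finiteDimensional K C)]
  rintro ⟨μ, hμC, hμB⟩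
  exact h.notMem_of_mem_right hμC (mem_spectrum_iff_isRoot_charpoly.mpr hμB)

theorem Matrix.eq_zero_of_mul_eq_mul_of_disjoint_spectrum {B : Matrix n n K} {C : Matrix p p K}
    (h : Disjoint (spectrum K B) (spectrum K C)) {P : Matrix p n K} (hP : P * B = C * P) :
    P = 0 := by
  cases isEmpty_or_nonempty p
  · exact Subsingleton.elim _ _
  have hchar := mul_aeval_eq_aeval_mul hP B.charpoly
  rw [aeval_self_charpoly, Matrix.mul_zero, eq_comm] at hchar
  have hdet := (isUnit_iff_isUnit_det _).mp (isUnit_aeval_charpoly_of_disjoint h)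
  rw [← nonsing_inv_mul_cancel_left _ P hdet, hchar, Matrix.mul_zero]

end Sylvester

section Nonresonance

variable {K : Type*} [Field K] {n : Type*} [Fintype n] [DecidableEq n]

def Matrix.IsNonresonant (τ : K) (B : Matrix n n K) : Prop :=
  ∀ μ ∈ spectrum K B, ∀ ν ∈ spectrum K B, ∀ k : ℕ, k ≠ 0 → μ - ν ≠ k * τ

def Matrix.shiftedAd (τ k : K) (B : Matrix n n K) : Matrix n n K →ₗ[K] Matrix n n K :=
  k • LinearMap.id - τ⁻¹ • (LinearMap.mulLeft K B - LinearMap.mulRight K B)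

@[simp]
theorem Matrix.shiftedAd_apply (τ k : K) (B P : Matrix n n K) :
    shiftedAd τ k B P = k • P - τ⁻¹ • (B * P - P * B) :=
  rfl

theorem spectrum.disjoint_sub_algebraMap {A : Type*} [Ring A] [Algebra K A] {c : K} {a : A}
    (h : ∀ μ ∈ spectrum K a, ∀ ν ∈ spectrum K a, μ - ν ≠ c) :
    Disjoint (spectrum K a) (spectrum K (a - algebraMap K A c)) := by
  rw [← spectrum.sub_singleton_eq, Set.disjoint_left]
  rintro μ hμ ⟨ν, hν, _, rfl, rfl⟩
  exact h ν hν _ hμ (by ring)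

theorem Matrix.IsNonresonant.bijective_shiftedAd [IsAlgClosed K] {τ : K} (hτ : τ ≠ 0)
    {B : Matrix n n K} (hB : B.IsNonresonant τ) {k : ℕ} (hk : k ≠ 0) :
    Function.Bijective (shiftedAd τ k B) := by
  have hinj : Function.Injective (shiftedAd τ k B) := by
    rw [← LinearMap.ker_eq_bot, LinearMap.ker_eq_bot']
    intro P hP
    refine eq_zero_of_mul_eq_mul_of_disjoint_spectrum
      (spectrum.disjoint_sub_algebraMap fun μ hμ ν hν => hB μ hμ ν hν k hk) ?_
    rw [shiftedAd_apply, sub_eq_zero] at hP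
    have hcomm : ((k : K) * τ) • P = B * P - P * B := by
      rw [mul_comm, mul_smul, hP, smul_inv_smul₀ hτ]
    rw [Matrix.sub_mul, Algebra.algebraMap_eq_smul_one, smul_one_mul, hcomm]
    abel
  exact ⟨hinj, LinearMap.injective_iff_surjective.mp hinj⟩

theorem Matrix.isNonresonant_of_unique [CharZero K] [Unique n] {τ : K} (hτ : τ ≠ 0)
    (B : Matrix n n K) : B.IsNonresonant τ := by
  have hB : B = algebraMap K _ (B default default) := by
    ext i j
    rw [Subsingleton.elim i default, Subsingleton.elim j default]
    simp [algebraMap_matrix_apply]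
  rw [IsNonresonant, hB, spectrum.scalar_eq]
  rintro μ rfl ν rfl k hk
  simp [hk, hτ]

end Nonresonance

section FormalSolution

variable {R S : Type*} [Ring R] [Algebra ℂ R] [Ring S] [Algebra ℂ S]

def formalRecRHS (τ : ℂ) (A δ : R) (k : ℂ) (X : R) : R :=
  (k • 1 - (1 / τ) • A) * X + X * ((1 / τ) • δ)

def IsFormalSolutionSeq (τ : ℂ) (E A δ : R) (h : ℕ → R) : Prop :=
  h 0 = 1 ∧ ∀ M : ℕ,
    h (M + 1) * (Complex.I • E) - (Complex.I • E) * h (M + 1) = formalRecRHS τ A δ M (h M)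

theorem AlgEquiv.map_formalRecRHS (φ : R ≃ₐ[ℂ] S) (τ : ℂ) (A δ : R) (k : ℂ) (X : R) :
    φ (formalRecRHS τ A δ k X) = formalRecRHS τ (φ A) (φ δ) k (φ X) := by
  simp [formalRecRHS]

theorem AlgEquiv.existsUnique_isFormalSolutionSeq_iff (φ : R ≃ₐ[ℂ] S) (τ : ℂ) (E A δ : R) :
    (∃! h, IsFormalSolutionSeq τ (φ E) (φ A) (φ δ) h) ↔ ∃! h, IsFormalSolutionSeq τ E A δ h := by
  refine ((Equiv.piCongrRight fun _ : ℕ => φ.toEquiv).existsUnique_congr fun h => ?_).symm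
  refine and_congr ?_ (forall_congr' fun M => ?_)
  · rw [← φ.injective.eq_iff, map_one]
    rfl
  · rw [← φ.injective.eq_iff]
    simp [map_formalRecRHS]

end FormalSolution

/-- `C M x` is the solvability condition for the step `r M x`; it is imposed on the new term
as well, which is what makes the step unique. -/
theorem existsUnique_seq_of_existsUnique_step {α : Type*} (x₀ : α) (r : ℕ → α → α → Prop)
    (C : ℕ → α → Prop) (h₀ : C 0 x₀) (hC : ∀ M x y, r M x y → C M x)
    (hstep : ∀ M x, C M x → ∃! y, r M x y ∧ C (M + 1) y) :
    ∃! h : ℕ → α, h 0 = x₀ ∧ ∀ M, r M (h M) (h (M + 1)) := by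
  choose! f hf using fun M x hx => (hstep M x hx).exists
  let h : ℕ → α := fun M => Nat.rec x₀ f M
  have hCh : ∀ M, C M (h M) := fun M => by
    induction M with
    | zero => exact h₀
    | succ M ih => exact (hf M _ ih).2
  refine ⟨h, ⟨rfl, fun M => (hf M _ (hCh M)).1⟩, ?_⟩
  rintro g ⟨hg₀, hg⟩
  funext M
  induction M with
  | zero => exact hg₀
  | succ M ih =>
    refine (hstep M (h M) (hCh M)).unique ⟨?_, hC _ _ _ (hg (M + 1))⟩ (hf M _ (hCh M))
    rw [← ih]
    exact hg M

section Blocks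

variable {n o : Type*} [Fintype n] [DecidableEq n] [Fintype o] [DecidableEq o]

def Matrix.blockDiagPart {α : Type*} [Zero α] (A : Matrix (n ⊕ o) (n ⊕ o) α) :
    Matrix (n ⊕ o) (n ⊕ o) α :=
  fromBlocks A.toBlocks₁₁ 0 0 A.toBlocks₂₂

def Matrix.IsBlockOffDiag {α : Type*} [Zero α] (A : Matrix (n ⊕ o) (n ⊕ o) α) : Prop :=
  A.toBlocks₁₁ = 0 ∧ A.toBlocks₂₂ = 0

theorem Matrix.commutator_smul_fromBlocks_zero_zero_zero_one (c : ℂ)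
    (Y : Matrix (n ⊕ o) (n ⊕ o) ℂ) :
    Y * (c • fromBlocks 0 0 0 1) - (c • fromBlocks 0 0 0 1) * Y =
      fromBlocks 0 (c • Y.toBlocks₁₂) (-(c • Y.toBlocks₂₁)) 0 := by
  conv_lhs => rw [← fromBlocks_toBlocks Y]
  simp [fromBlocks_smul, fromBlocks_multiply, sub_eq_add_neg, fromBlocks_neg, fromBlocks_add]

variable (τ : ℂ) (A : Matrix (n ⊕ o) (n ⊕ o) ℂ)

theorem Matrix.toBlocks₁₁_formalRecRHS (k : ℂ) (X : Matrix (n ⊕ o) (n ⊕ o) ℂ) :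
    (formalRecRHS τ A A.blockDiagPart k X).toBlocks₁₁ =
      shiftedAd τ k A.toBlocks₁₁ X.toBlocks₁₁ - τ⁻¹ • (A.toBlocks₁₂ * X.toBlocks₂₁) := by
  conv_lhs => rw [← fromBlocks_toBlocks A, ← fromBlocks_toBlocks X]
  simp only [formalRecRHS, ← fromBlocks_one, fromBlocks_smul, smul_zero, one_div, sub_eq_add_neg,
    fromBlocks_neg, fromBlocks_add, zero_add, fromBlocks_multiply, Matrix.add_mul,
    Algebra.smul_mul_assoc, one_mul, neg_mul, Matrix.neg_mul, smul_mul, Matrix.one_mul,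
    blockDiagPart, toBlocks_fromBlocks₁₁, toBlocks_fromBlocks₂₂, Algebra.mul_smul_comm,
    Matrix.mul_zero, add_zero, Matrix.mul_smul, shiftedAd_apply, smul_add, smul_neg, neg_add_rev,
    neg_neg]
  abel

theorem Matrix.toBlocks₂₂_formalRecRHS (k : ℂ) (X : Matrix (n ⊕ o) (n ⊕ o) ℂ) :
    (formalRecRHS τ A A.blockDiagPart k X).toBlocks₂₂ =
      shiftedAd τ k A.toBlocks₂₂ X.toBlocks₂₂ - τ⁻¹ • (A.toBlocks₂₁ * X.toBlocks₁₂) := by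
  conv_lhs => rw [← fromBlocks_toBlocks A, ← fromBlocks_toBlocks X]
  simp only [formalRecRHS, ← fromBlocks_one, fromBlocks_smul, smul_zero, one_div, sub_eq_add_neg,
    fromBlocks_neg, fromBlocks_add, zero_add, fromBlocks_multiply, Matrix.add_mul,
    Algebra.smul_mul_assoc, one_mul, neg_mul, Matrix.neg_mul, smul_mul, Matrix.one_mul,
    blockDiagPart, toBlocks_fromBlocks₁₁, toBlocks_fromBlocks₂₂, Algebra.mul_smul_comm,
    Matrix.mul_zero, add_zero, Matrix.mul_smul, shiftedAd_apply, smul_add, smul_neg, neg_add_rev,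
    neg_neg]
  abel

theorem Matrix.isBlockOffDiag_formalRecRHS_zero_one :
    (formalRecRHS τ A A.blockDiagPart 0 1).IsBlockOffDiag := by
  simp [IsBlockOffDiag, toBlocks₁₁_formalRecRHS, toBlocks₂₂_formalRecRHS, ← fromBlocks_one]

theorem Matrix.commutator_eq_and_isBlockOffDiag_formalRecRHS_iff {R : Matrix (n ⊕ o) (n ⊕ o) ℂ} (hR : R.IsBlockOffDiag) (k : ℂ)
    (Y : Matrix (n ⊕ o) (n ⊕ o) ℂ) :
    (Y * (Complex.I • fromBlocks 0 0 0 1) - (Complex.I • fromBlocks 0 0 0 1) * Y = R ∧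
        (formalRecRHS τ A A.blockDiagPart k Y).IsBlockOffDiag) ↔
      Complex.I • Y.toBlocks₁₂ = R.toBlocks₁₂ ∧ Complex.I • Y.toBlocks₂₁ = -R.toBlocks₂₁ ∧
        shiftedAd τ k A.toBlocks₁₁ Y.toBlocks₁₁ = τ⁻¹ • (A.toBlocks₁₂ * Y.toBlocks₂₁) ∧
        shiftedAd τ k A.toBlocks₂₂ Y.toBlocks₂₂ = τ⁻¹ • (A.toBlocks₂₁ * Y.toBlocks₁₂) := by
  conv_lhs =>
    rw [commutator_smul_fromBlocks_zero_zero_zero_one, ← fromBlocks_toBlocks R, hR.1, hR.2]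
  simp only [fromBlocks_inj, IsBlockOffDiag, toBlocks₁₁_formalRecRHS, toBlocks₂₂_formalRecRHS,
    sub_eq_zero, neg_eq_iff_eq_neg, true_and, and_true, and_assoc]

variable {τ A}

theorem Matrix.existsUnique_step_formalRecRHS (hτ : τ ≠ 0) (h₁ : A.toBlocks₁₁.IsNonresonant τ)
    (h₂ : A.toBlocks₂₂.IsNonresonant τ) (M : ℕ) {X : Matrix (n ⊕ o) (n ⊕ o) ℂ}
    (hX : (formalRecRHS τ A A.blockDiagPart M X).IsBlockOffDiag) :
    ∃! Y : Matrix (n ⊕ o) (n ⊕ o) ℂ,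
      Y * (Complex.I • fromBlocks 0 0 0 1) - (Complex.I • fromBlocks 0 0 0 1) * Y =
          formalRecRHS τ A A.blockDiagPart M X ∧
        (formalRecRHS τ A A.blockDiagPart (M + 1 : ℕ) Y).IsBlockOffDiag := by
  set R := formalRecRHS τ A A.blockDiagPart M X
  have hY := commutator_eq_and_isBlockOffDiag_formalRecRHS_iff τ A hX (M + 1 : ℕ)
  obtain ⟨inj₁, surj₁⟩ := h₁.bijective_shiftedAd hτ (k := M + 1) M.succ_ne_zero
  obtain ⟨inj₂, surj₂⟩ := h₂.bijective_shiftedAd hτ (k := M + 1) M.succ_ne_zero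
  refine existsUnique_of_exists_of_unique ?_ fun Y Y' hY₁ hY₂ => ?_
  · obtain ⟨P, hP⟩ := surj₁ (τ⁻¹ • (A.toBlocks₁₂ * (Complex.I⁻¹ • -R.toBlocks₂₁)))
    obtain ⟨Q, hQ⟩ := surj₂ (τ⁻¹ • (A.toBlocks₂₁ * (Complex.I⁻¹ • R.toBlocks₁₂)))
    refine ⟨fromBlocks P (Complex.I⁻¹ • R.toBlocks₁₂) (Complex.I⁻¹ • -R.toBlocks₂₁) Q,
      (hY _).2 ?_⟩
    simp only [toBlocks_fromBlocks₁₁, toBlocks_fromBlocks₁₂, toBlocks_fromBlocks₂₁,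
      toBlocks_fromBlocks₂₂, smul_inv_smul₀ Complex.I_ne_zero, true_and]
    exact ⟨hP, hQ⟩
  · obtain ⟨h₁₂, h₂₁, h₁₁, h₂₂⟩ := (hY Y).1 hY₁
    obtain ⟨h₁₂', h₂₁', h₁₁', h₂₂'⟩ := (hY Y').1 hY₂
    have e₁₂ : Y.toBlocks₁₂ = Y'.toBlocks₁₂ :=
      smul_right_injective _ Complex.I_ne_zero (h₁₂.trans h₁₂'.symm)
    have e₂₁ : Y.toBlocks₂₁ = Y'.toBlocks₂₁ :=
      smul_right_injective _ Complex.I_ne_zero (h₂₁.trans h₂₁'.symm)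
    refine ext_iff_blocks.2 ⟨inj₁ ?_, e₁₂, e₂₁, inj₂ ?_⟩
    · rw [h₁₁, h₁₁', e₂₁]
    · rw [h₂₂, h₂₂', e₁₂]

theorem Matrix.existsUnique_isFormalSolutionSeq_blockDiagPart (hτ : τ ≠ 0)
    (h₁ : A.toBlocks₁₁.IsNonresonant τ) (h₂ : A.toBlocks₂₂.IsNonresonant τ) :
    ∃! h, IsFormalSolutionSeq τ (fromBlocks 0 0 0 1) A A.blockDiagPart h :=
  existsUnique_seq_of_existsUnique_step 1
    (fun M X Y => Y * (Complex.I • fromBlocks 0 0 0 1) - (Complex.I • fromBlocks 0 0 0 1) * Y =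
      formalRecRHS τ A A.blockDiagPart M X)
    (fun M X => (formalRecRHS τ A A.blockDiagPart M X).IsBlockOffDiag)
    (by simpa using isBlockOffDiag_formalRecRHS_zero_one τ A)
    (fun M X Y hXY => by
      rw [← hXY, commutator_smul_fromBlocks_zero_zero_zero_one]
      exact ⟨rfl, rfl⟩)
    (fun M _ hX => existsUnique_step_formalRecRHS hτ h₁ h₂ M hX)

end Blocks

theorem twoPiI_ne_zero : twoPiI ≠ 0 := by
  simp [twoPiI, Real.pi_ne_zero]

theorem reindexAlgEquiv_single_last_last (m : ℕ) :
    reindexAlgEquiv ℂ ℂ (finSumFinEquiv (m := m + 1) (n := 1)).symm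
      (single (Fin.last (m + 1)) (Fin.last (m + 1)) 1) = fromBlocks 0 0 0 1 := by
  ext (a | a) (b | b) <;>
    simp [single_apply, one_apply, Fin.ext_iff, Fin.fin_one_eq_zero, a.isLt.ne', b.isLt.ne']

theorem reindexAlgEquiv_deltaN (m : ℕ) (A : Matrix (Fin (m + 2)) (Fin (m + 2)) ℂ) :
    reindexAlgEquiv ℂ ℂ (finSumFinEquiv (m := m + 1) (n := 1)).symm (deltaN m A) =
      (reindexAlgEquiv ℂ ℂ (finSumFinEquiv (m := m + 1) (n := 1)).symm A).blockDiagPart := by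
  ext (a | a) (b | b) <;>
    simp [deltaN, blockDiagPart, toBlocks₁₁, toBlocks₂₂, Fin.ext_iff, Fin.fin_one_eq_zero,
      a.isLt.ne, b.isLt.ne]

/-- existence and uniqueness of the coefficients `h_m` of the formal
fundamental solution, under the nonresonance condition that no two eigenvalues of
`A^(n-1)` differ by a nonzero integer multiple of `2πi`. -/
theorem stmt8 (m : ℕ) (A : Matrix (Fin (m+2)) (Fin (m+2)) ℂ)
    (hres : ∀ μ ∈ spectrum ℂ (A.submatrix Fin.castSucc Fin.castSucc),
      ∀ ν ∈ spectrum ℂ (A.submatrix Fin.castSucc Fin.castSucc),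
      ∀ k : ℤ, k ≠ 0 → μ - ν ≠ twoPiI * (k : ℂ)) :
    ∃! h : ℕ → Matrix (Fin (m+2)) (Fin (m+2)) ℂ,
      h 0 = 1 ∧
      ∀ M : ℕ,
        h (M+1) * (Complex.I •
            Matrix.single (Fin.last (m+1)) (Fin.last (m+1)) (1 : ℂ))
          - (Complex.I •
            Matrix.single (Fin.last (m+1)) (Fin.last (m+1)) (1 : ℂ)) * h (M+1)
        = ((M : ℂ) • (1 : Matrix (Fin (m+2)) (Fin (m+2)) ℂ)
            - (1 / twoPiI) • A) * h M
          + h M * ((1 / twoPiI) • deltaN m A) := by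
  set ψ := reindexAlgEquiv ℂ ℂ (finSumFinEquiv (m := m + 1) (n := 1)).symm
  have h₁ : (ψ A).toBlocks₁₁.IsNonresonant twoPiI := fun μ hμ ν hν k hk => by
    simpa [mul_comm] using hres μ hμ ν hν k (by exact_mod_cast hk)
  have hsol := existsUnique_isFormalSolutionSeq_blockDiagPart twoPiI_ne_zero h₁
    (isNonresonant_of_unique twoPiI_ne_zero _)
  rw [← reindexAlgEquiv_single_last_last, ← reindexAlgEquiv_deltaN,
    ψ.existsUnique_isFormalSolutionSeq_iff] at hsol
  exact hsol
end
end
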